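/- arXiv:1905.05544 — 2 statements merged into one kernel-verified Lean document; each statement's English description precedes it below -/
import Mathlib

section
/- If a sequence of Borel probability measures μⁿ on a Polish space X converges weakly to μ, then for every point x in the support of μ there exists a sequence of points xⁿ in the support of μⁿ converging to x. -/
open MeasureTheory Filter Topology Metric Set
open scoped NNReal ENNReal

noncomputable section

variable {X : Type*} [MetricSpace X] [MeasurableSpace X] [BorelSpace X]

/-- `π` is a coupling of `μ` and `ν`: its marginals are `μ` and `ν`. -/
def IsCoupling (π : Measure (X × X)) (μ ν : Measure X) : Prop :=
  π.map Prod.fst = μ ∧ π.map Prod.snd = ν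

/-- The `p`-transport cost of a plan `π`. -/
def transportCost (p : ℝ) (π : Measure (X × X)) : ℝ≥0∞ :=
  ∫⁻ z, ENNReal.ofReal (dist z.1 z.2 ^ p) ∂π

/-- The `p`-Wasserstein distance, valued in `ℝ≥0∞`. -/
def WpE (p : ℝ) (μ ν : Measure X) : ℝ≥0∞ :=
  (⨅ π : {π : Measure (X × X) // IsCoupling π μ ν ∧ IsProbabilityMeasure π},
    transportCost p π.1) ^ (1 / p)

/-- The `p`-Wasserstein distance, as a real number. -/
def Wp (p : ℝ) (μ ν : Measure X) : ℝ := (WpE p μ ν).toReal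

/-- `π` is an optimal coupling of `(μ, ν)` for the `p`-Wasserstein cost. -/
def IsOptimalCoupling (p : ℝ) (π : Measure (X × X)) (μ ν : Measure X) : Prop :=
  IsCoupling π μ ν ∧ IsProbabilityMeasure π ∧
    transportCost p π =
      ⨅ π' : {π' : Measure (X × X) // IsCoupling π' μ ν ∧ IsProbabilityMeasure π'},
        transportCost p π'.1

/-- membership in the Wasserstein space `P_p(X)`: a Borel probability measure
with finite `p`-th moment. -/
def HasFiniteMomentP (p : ℝ) (μ : Measure X) : Prop :=
  IsProbabilityMeasure μ ∧ ∃ x0 : X, ∫⁻ x, ENNReal.ofReal (dist x0 x ^ p) ∂μ < ⊤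

/-- A unit-speed ray in the Wasserstein space `P_p(X)`, parametrized by `t ≥ 0`. -/
def IsUnitRayW (p : ℝ) (μ : ℝ → Measure X) : Prop :=
  (∀ t, 0 ≤ t → HasFiniteMomentP p (μ t)) ∧
    ∀ s t, 0 ≤ s → 0 ≤ t → Wp p (μ s) (μ t) = |s - t|

/-- A unit-speed geodesic `(ν_t)_{0 ≤ t ≤ L}` in the Wasserstein space `P_p(X)`. -/
def IsUnitGeodesicW (p : ℝ) (ν : ℝ → Measure X) (L : ℝ) : Prop :=
  (∀ t ∈ Icc (0:ℝ) L, HasFiniteMomentP p (ν t)) ∧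
    ∀ s t, s ∈ Icc (0:ℝ) L → t ∈ Icc (0:ℝ) L → Wp p (ν s) (ν t) = |s - t|

/-- `(ν_t)_{t ≥ 0}` is a co-ray from `ν 0` to the unit-speed ray `(μ_t)_{t ≥ 0}`:
it is a unit-speed ray which is the pointwise `W_p`-limit of unit-speed geodesics
from `ν₀ⁿ → ν 0` to `μ_{t_n}`, `t_n → ∞`. -/
def IsCoRay (p : ℝ) (μ ν : ℝ → Measure X) : Prop :=
  IsUnitRayW p ν ∧
  ∃ (tn : ℕ → ℝ) (ν0n : ℕ → Measure X) (νn : ℕ → ℝ → Measure X),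
    Tendsto tn atTop atTop ∧
    (∀ n, HasFiniteMomentP p (ν0n n)) ∧
    Tendsto (fun n => Wp p (ν0n n) (ν 0)) atTop (𝓝 0) ∧
    (∀ n, νn n 0 = ν0n n ∧ νn n (Wp p (ν0n n) (μ (tn n))) = μ (tn n) ∧
      IsUnitGeodesicW p (νn n) (Wp p (ν0n n) (μ (tn n)))) ∧
    ∀ t, 0 ≤ t → Tendsto (fun n => Wp p (νn n t) (ν t)) atTop (𝓝 0)

/-- Busemann function of the ray `(μ_t)_{t ≥ 0}` in `P_p(X)`. -/
def busemann (p : ℝ) (μ : ℝ → Measure X) (ν : Measure X) : ℝ :=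
  limUnder atTop fun t : ℝ => Wp p ν (μ t) - t

/-- Length space, via the approximate-midpoint characterization
(equivalent to the usual definition for complete spaces). -/
def IsLengthSpace (Y : Type*) [MetricSpace Y] : Prop :=
  ∀ x y : Y, ∀ ε > (0:ℝ), ∃ z : Y,
    dist x z ≤ dist x y / 2 + ε ∧ dist z y ≤ dist x y / 2 + ε

/-- Non-branching: any constant-speed geodesic segment is determined by
its restriction to a nontrivial time-interval. -/
def IsNonBranching (Y : Type*) [MetricSpace Y] : Prop :=
  ∀ (a b : ℝ) (γ₁ γ₂ : ℝ → Y), a < b →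
    (∀ s t, s ∈ Icc a b → t ∈ Icc a b →
      (b - a) * dist (γ₁ s) (γ₁ t) = |s - t| * dist (γ₁ a) (γ₁ b)) →
    (∀ s t, s ∈ Icc a b → t ∈ Icc a b →
      (b - a) * dist (γ₂ s) (γ₂ t) = |s - t| * dist (γ₂ a) (γ₂ b)) →
    (∃ c d, a ≤ c ∧ c < d ∧ d ≤ b ∧ ∀ t ∈ Icc c d, γ₁ t = γ₂ t) →
    ∀ t ∈ Icc a b, γ₁ t = γ₂ t

end

/-- if `μⁿ ⇒ μ` weakly on a Polish space, every point of `supp μ`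
is a limit of points of `supp μⁿ`. -/
theorem stmt_1 {X : Type*} [MetricSpace X] [MeasurableSpace X] [BorelSpace X]
    [CompleteSpace X] [TopologicalSpace.SeparableSpace X]
    (μn : ℕ → ProbabilityMeasure X) (μ : ProbabilityMeasure X)
    (h : Tendsto μn atTop (𝓝 μ))
    (x : X) (hx : ∀ r > (0:ℝ), 0 < (μ : Measure X) (ball x r)) :
    ∃ xn : ℕ → X,
      (∀ n, ∀ r > (0:ℝ), 0 < (μn n : Measure X) (ball (xn n) r)) ∧
      Tendsto xn atTop (𝓝 x) := by
  -- support sets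
  set S : ℕ → Set X := fun n => {y | ∀ r > (0:ℝ), 0 < (μn n : Measure X) (ball y r)} with hS
  -- if an open set has positive measure, it meets the support
  have key : ∀ n (U : Set X), IsOpen U → (μn n : Measure X) U ≠ 0 → (S n ∩ U).Nonempty := by
    intro n U hU hpos
    obtain ⟨y, hyU, hy⟩ := MeasureTheory.exists_mem_forall_mem_nhdsWithin_pos_measure hpos
    refine ⟨y, fun r hr => ?_, hyU⟩
    have hmem : U ∩ ball y r ∈ 𝓝[U] y :=
      inter_mem_nhdsWithin U (ball_mem_nhds y hr)
    exact lt_of_lt_of_le (hy _ hmem) (measure_mono inter_subset_right)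
  have Snonempty : ∀ n, (S n).Nonempty := by
    intro n
    obtain ⟨y, hy⟩ := key n univ isOpen_univ (by simp [measure_univ])
    exact ⟨y, hy.1⟩
  -- eventually the support meets small balls around x
  have meets : ∀ r > (0:ℝ), ∀ᶠ n in atTop, (S n ∩ ball x r).Nonempty := by
    intro r hr
    have hlim := ProbabilityMeasure.le_liminf_measure_open_of_tendsto (G := ball x r) h isOpen_ball
    have h0 : (0:ℝ≥0∞) < atTop.liminf fun n => (μn n : Measure X) (ball x r) :=
      lt_of_lt_of_le (hx r hr) hlim
    filter_upwards [Filter.eventually_lt_of_lt_liminf h0] with n hn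
    exact key n _ isOpen_ball hn.ne'
  -- choose near-optimal points in the supports
  have hSn : ∀ n, ∃ y ∈ S n, dist x y < infDist x (S n) + 1 / (n + 1) := by
    intro n
    rw [← Metric.infDist_lt_iff (Snonempty n)]
    have : (0:ℝ) < 1 / (n + 1) := by positivity
    linarith
  choose xn hxn hdist using hSn
  refine ⟨xn, hxn, ?_⟩
  -- infDist x (S n) → 0
  have hinf : Tendsto (fun n => infDist x (S n)) atTop (𝓝 0) := by
    rw [Metric.tendsto_atTop]
    intro ε hε
    have := meets (ε / 2) (by linarith)
    rw [eventually_atTop] at this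
    obtain ⟨N, hN⟩ := this
    refine ⟨N, fun n hn => ?_⟩
    obtain ⟨y, hyS, hyb⟩ := hN n hn
    have h1 : infDist x (S n) ≤ dist x y := infDist_le_dist_of_mem hyS
    have h2 : dist x y < ε / 2 := by rw [dist_comm]; exact mem_ball.mp hyb
    have h3 : (0:ℝ) ≤ infDist x (S n) := infDist_nonneg
    rw [Real.dist_eq, sub_zero, abs_of_nonneg h3]
    linarith
  rw [Metric.tendsto_atTop]
  intro ε hε
  have h2 : Tendsto (fun n : ℕ => infDist x (S n) + 1 / (n + 1 : ℝ)) atTop (𝓝 0) := by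
    simpa using hinf.add tendsto_one_div_add_atTop_nhds_zero_nat
  rw [Metric.tendsto_atTop] at h2
  obtain ⟨N, hN⟩ := h2 ε hε
  refine ⟨N, fun n hn => ?_⟩
  have := hN n hn
  rw [Real.dist_eq, sub_zero] at this
  have h3 : dist x (xn n) < ε := ((hdist n).trans_le (le_abs_self _)).trans this
  rwa [dist_comm]
end

section
/- Let (μ_t)_{t≥0} be a unit-speed ray in P_p(X) and suppose (ν_t)_{t≥0} is a co-ray to (μ_t). Then the Busemann function b_μ decreases linearly along the co-ray: b_μ(ν_{t₁}) − b_μ(ν_{t₂}) = t₂ − t₁ for all t₁, t₂ ≥ 0. -/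
open MeasureTheory Filter Topology Metric Set
open scoped NNReal ENNReal

/-!
The Busemann function is 1-Lipschitz for `W_p`, which gives
`b_μ(ν_{t₁}) ≤ b_μ(ν_{t₂}) + (t₂ - t₁)` for `t₁ ≤ t₂`. For the reverse inequality, let `ν^n` be
the approximating geodesics, of length `L_n → ∞`, ending at `μ_{t_n}`. Since `ν^n` is a geodesic,
`W_p(ν^n_{t₁}, μ_{t_n}) - W_p(ν^n_{t₂}, μ_{t_n}) = t₂ - t₁`, and replacing `ν^n_{tᵢ}` by the
limits `ν_{tᵢ}` costs `o(1)`; subtracting `t_n` and letting `n → ∞` gives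
`b_μ(ν_{t₂}) + (t₂ - t₁) ≤ b_μ(ν_{t₁})`.

Both steps rest on the triangle inequality for `W_p`: two couplings with a common marginal are
glued by disintegrating along it (`X` is Polish), and Minkowski's inequality bounds the cost of
the composite coupling.
-/

open ProbabilityTheory

section Coupling

variable {X : Type*} [MeasurableSpace X]

theorem IsCoupling.map_swap {π : Measure (X × X)} {μ ν : Measure X} (h : IsCoupling π μ ν) :
    IsCoupling (π.map Prod.swap) ν μ := by
  constructor
  · rw [Measure.map_map measurable_fst measurable_swap]
    exact h.2
  · rw [Measure.map_map measurable_snd measurable_swap]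
    exact h.1

/-- Gluing along a common first marginal; `σ` lives on `middle × (left × right)`. -/
theorem exists_gluing [StandardBorelSpace X] {π₁ π₂ : Measure (X × X)}
    [IsProbabilityMeasure π₁] [IsProbabilityMeasure π₂] (h : π₁.fst = π₂.fst) :
    ∃ σ : Measure (X × X × X), IsProbabilityMeasure σ ∧
      σ.map (Prod.map id Prod.fst) = π₁ ∧ σ.map (Prod.map id Prod.snd) = π₂ := by
  have := nonempty_of_isProbabilityMeasure π₁
  have : Nonempty X := ⟨(Classical.arbitrary (X × X)).1⟩
  refine ⟨π₁.fst ⊗ₘ (π₁.condKernel ×ₖ π₂.condKernel), inferInstance, ?_, ?_⟩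
  · rw [← Measure.compProd_map measurable_fst, ← Kernel.fst_eq, Kernel.fst_prod,
      π₁.disintegrate]
  · rw [← Measure.compProd_map measurable_snd, ← Kernel.snd_eq, Kernel.snd_prod, h,
      π₂.disintegrate]

end Coupling

section Wasserstein

variable {X : Type*} [MetricSpace X] [MeasurableSpace X] {p : ℝ}

theorem transportCost_map_swap (π : Measure (X × X)) :
    transportCost p (π.map Prod.swap) = transportCost p π := by
  have : (Prod.swap : X × X → X × X) = MeasurableEquiv.prodComm := rfl
  rw [transportCost, this, lintegral_map_equiv]
  exact lintegral_congr fun z => by rw [dist_comm]; rfl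

theorem WpE_le_transportCost_rpow (hp : 0 ≤ p) {π : Measure (X × X)} {μ ν : Measure X}
    (h : IsCoupling π μ ν) [IsProbabilityMeasure π] :
    WpE p μ ν ≤ transportCost p π ^ (1 / p) :=
  ENNReal.rpow_le_rpow (iInf_le_of_le ⟨π, h, inferInstance⟩ le_rfl) (by positivity)

theorem WpE_eq_iInf_transportCost_rpow (hp : 0 < p) (μ ν : Measure X) :
    WpE p μ ν = ⨅ π : {π : Measure (X × X) // IsCoupling π μ ν ∧ IsProbabilityMeasure π},
      transportCost p π.1 ^ (1 / p) :=
  (ENNReal.orderIsoRpow (1 / p) (by positivity)).map_iInf _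

theorem WpE_comm (μ ν : Measure X) : WpE p μ ν = WpE p ν μ := by
  have key : ∀ μ ν : Measure X,
      (⨅ π : {π : Measure (X × X) // IsCoupling π μ ν ∧ IsProbabilityMeasure π},
        transportCost p π.1) ≤
      ⨅ π : {π : Measure (X × X) // IsCoupling π ν μ ∧ IsProbabilityMeasure π},
        transportCost p π.1 := by
    refine fun μ ν => le_iInf fun π => ?_
    have := π.2.2
    have := Measure.isProbabilityMeasure_map (μ := π.1) measurable_swap.aemeasurable
    exact iInf_le_of_le ⟨_, π.2.1.map_swap, inferInstance⟩ (transportCost_map_swap π.1).le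
  rw [WpE, WpE, le_antisymm (key μ ν) (key ν μ)]

theorem Wp_comm (μ ν : Measure X) : Wp p μ ν = Wp p ν μ := by
  rw [Wp, Wp, WpE_comm]

variable [BorelSpace X] [SecondCountableTopology X]

theorem transportCost_map (hp : 0 ≤ p) {Y : Type*} [MeasurableSpace Y] {f : Y → X × X}
    (hf : Measurable f) (σ : Measure Y) :
    transportCost p (σ.map f) = ∫⁻ y, edist (f y).1 (f y).2 ^ p ∂σ := by
  rw [transportCost, lintegral_map (by fun_prop) hf]
  refine lintegral_congr fun y => ?_
  rw [edist_dist, ENNReal.ofReal_rpow_of_nonneg dist_nonneg hp]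

theorem WpE_dirac_le (hp : 0 ≤ p) (μ : Measure X) [IsProbabilityMeasure μ] (x : X) :
    WpE p μ (Measure.dirac x) ≤ (∫⁻ y, ENNReal.ofReal (dist x y ^ p) ∂μ) ^ (1 / p) := by
  refine (WpE_le_transportCost_rpow hp (π := μ.prod (Measure.dirac x))
    ⟨Measure.fst_prod, Measure.snd_prod⟩).trans_eq ?_
  rw [transportCost, lintegral_prod _ (by fun_prop)]
  simp [lintegral_dirac, dist_comm]

theorem HasFiniteMomentP.exists_WpE_dirac_lt_top (hp : 0 ≤ p) {μ : Measure X}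
    (hμ : HasFiniteMomentP p μ) : ∃ x, WpE p μ (Measure.dirac x) < ⊤ := by
  have := hμ.1
  obtain ⟨x, hx⟩ := hμ.2
  exact ⟨x, (WpE_dirac_le hp μ x).trans_lt (ENNReal.rpow_lt_top_of_nonneg (by positivity) hx.ne)⟩

variable [StandardBorelSpace X]

theorem exists_isCoupling_transportCost_rpow_le (hp : 1 ≤ p) {μ ρ ν : Measure X}
    {π₁ π₂ : Measure (X × X)} (h₁ : IsCoupling π₁ μ ρ) (h₂ : IsCoupling π₂ ρ ν)
    [IsProbabilityMeasure π₁] [IsProbabilityMeasure π₂] :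
    ∃ π : Measure (X × X), IsCoupling π μ ν ∧ IsProbabilityMeasure π ∧
      transportCost p π ^ (1 / p) ≤
        transportCost p π₁ ^ (1 / p) + transportCost p π₂ ^ (1 / p) := by
  have hp₀ : 0 ≤ p := zero_le_one.trans hp
  have := Measure.isProbabilityMeasure_map (μ := π₁) measurable_swap.aemeasurable
  obtain ⟨σ, hσ, hσ₁, hσ₂⟩ := exists_gluing (π₁ := π₁.map Prod.swap) (π₂ := π₂)
    (h₁.map_swap.1.trans h₂.1.symm)
  have hmarg : ∀ f : X × X → X, Measurable f →
      (σ.map Prod.snd).map f = (σ.map (Prod.map id f)).map Prod.snd := fun f hf => by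
    rw [Measure.map_map hf measurable_snd, Measure.map_map measurable_snd (by fun_prop)]
    rfl
  refine ⟨σ.map Prod.snd, ⟨?_, ?_⟩,
    Measure.isProbabilityMeasure_map measurable_snd.aemeasurable, ?_⟩
  · rw [hmarg _ measurable_fst, hσ₁]
    exact h₁.map_swap.2
  · rw [hmarg _ measurable_snd, hσ₂]
    exact h₂.2
  rw [← transportCost_map_swap π₁, ← hσ₁, ← hσ₂, transportCost_map hp₀ measurable_snd,
    transportCost_map hp₀ (by fun_prop), transportCost_map hp₀ (by fun_prop)]
  calc (∫⁻ w, edist w.2.1 w.2.2 ^ p ∂σ) ^ (1 / p)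
      ≤ (∫⁻ w, (edist w.1 w.2.1 + edist w.1 w.2.2) ^ p ∂σ) ^ (1 / p) := by
        gcongr with w
        exact edist_triangle_left _ _ _
    _ ≤ _ := ENNReal.lintegral_Lp_add_le (by fun_prop) (by fun_prop) hp

theorem WpE_triangle (hp : 1 ≤ p) (μ ρ ν : Measure X) :
    WpE p μ ν ≤ WpE p μ ρ + WpE p ρ ν := by
  have hp₀ : 0 < p := zero_lt_one.trans_le hp
  rw [WpE_eq_iInf_transportCost_rpow hp₀ μ ρ, WpE_eq_iInf_transportCost_rpow hp₀ ρ ν,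
    ENNReal.iInf_add]
  refine le_iInf fun π₁ => ?_
  rw [ENNReal.add_iInf]
  refine le_iInf fun π₂ => ?_
  have := π₁.2.2
  have := π₂.2.2
  obtain ⟨π, hπ, _, hle⟩ := exists_isCoupling_transportCost_rpow_le hp π₁.2.1 π₂.2.1
  exact (WpE_le_transportCost_rpow hp₀.le hπ).trans hle

theorem WpE_lt_top (hp : 1 ≤ p) {μ ν : Measure X} (hμ : HasFiniteMomentP p μ)
    (hν : HasFiniteMomentP p ν) : WpE p μ ν < ⊤ := by
  have hp₀ : 0 ≤ p := zero_le_one.trans hp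
  obtain ⟨x, hx⟩ := hμ.exists_WpE_dirac_lt_top hp₀
  obtain ⟨y, hy⟩ := hν.exists_WpE_dirac_lt_top hp₀
  have hyx : WpE p (Measure.dirac y) (Measure.dirac x) < ⊤ := by
    refine (WpE_dirac_le hp₀ _ x).trans_lt ?_
    simpa [lintegral_dirac] using
      ENNReal.rpow_lt_top_of_nonneg (inv_nonneg.2 hp₀) ENNReal.ofReal_ne_top
  calc WpE p μ ν ≤ WpE p μ (Measure.dirac x) + WpE p (Measure.dirac x) ν :=
        WpE_triangle hp _ _ _
    _ ≤ WpE p μ (Measure.dirac x) + (WpE p (Measure.dirac x) (Measure.dirac y)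
        + WpE p (Measure.dirac y) ν) := by gcongr; exact WpE_triangle hp _ _ _
    _ < ⊤ := by
        rw [WpE_comm (Measure.dirac x) (Measure.dirac y), WpE_comm (Measure.dirac y) ν]
        exact ENNReal.add_lt_top.2 ⟨hx, ENNReal.add_lt_top.2 ⟨hyx, hy⟩⟩

theorem Wp_triangle (hp : 1 ≤ p) {μ ρ ν : Measure X} (hμ : HasFiniteMomentP p μ)
    (hρ : HasFiniteMomentP p ρ) (hν : HasFiniteMomentP p ν) :
    Wp p μ ν ≤ Wp p μ ρ + Wp p ρ ν := by
  rw [Wp, Wp, Wp, ← ENNReal.toReal_add (WpE_lt_top hp hμ hρ).ne (WpE_lt_top hp hρ hν).ne]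
  exact ENNReal.toReal_mono
    (ENNReal.add_lt_top.2 ⟨WpE_lt_top hp hμ hρ, WpE_lt_top hp hρ hν⟩).ne (WpE_triangle hp μ ρ ν)

end Wasserstein

section Busemann

variable {X : Type*} [MetricSpace X] [MeasurableSpace X] {p : ℝ}

theorem IsUnitRayW.Wp_eq_sub {μ : ℝ → Measure X} (hμ : IsUnitRayW p μ) {s t : ℝ} (hs : 0 ≤ s)
    (hst : s ≤ t) : Wp p (μ s) (μ t) = t - s := by
  rw [hμ.2 s t hs (hs.trans hst), abs_sub_comm, abs_of_nonneg (sub_nonneg.2 hst)]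

theorem IsUnitGeodesicW.Wp_eq_sub {γ : ℝ → Measure X} {L : ℝ} (hγ : IsUnitGeodesicW p γ L)
    {s t : ℝ} (hs : 0 ≤ s) (hst : s ≤ t) (ht : t ≤ L) : Wp p (γ s) (γ t) = t - s := by
  rw [hγ.2 s t ⟨hs, hst.trans ht⟩ ⟨hs.trans hst, ht⟩, abs_sub_comm,
    abs_of_nonneg (sub_nonneg.2 hst)]

variable [BorelSpace X] [SecondCountableTopology X] [StandardBorelSpace X]

/-- The geodesic identity `W(γ_{t₁}, γ_L) - W(γ_{t₂}, γ_L) = t₂ - t₁`, perturbed by moving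
`γ_{tᵢ}` to `aᵢ`. -/
theorem IsUnitGeodesicW.Wp_add_le (hp : 1 ≤ p) {γ : ℝ → Measure X} {L : ℝ}
    (hγ : IsUnitGeodesicW p γ L) {t₁ t₂ : ℝ} (h₁ : 0 ≤ t₁) (h₁₂ : t₁ ≤ t₂) (h₂ : t₂ ≤ L)
    {a₁ a₂ : Measure X} (ha₁ : HasFiniteMomentP p a₁) (ha₂ : HasFiniteMomentP p a₂) :
    Wp p a₂ (γ L) + (t₂ - t₁) ≤ Wp p (γ t₂) a₂ + Wp p (γ t₁) a₁ + Wp p a₁ (γ L) := by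
  have hmem : ∀ t, 0 ≤ t → t ≤ L → HasFiniteMomentP p (γ t) := fun t h0 hL => hγ.1 t ⟨h0, hL⟩
  have hL : 0 ≤ L := h₁.trans (h₁₂.trans h₂)
  have h₂L := Wp_triangle hp ha₂ (hmem t₂ (h₁.trans h₁₂) h₂) (hmem L hL le_rfl)
  have h₁L := Wp_triangle hp (hmem t₁ h₁ (h₁₂.trans h₂)) ha₁ (hmem L hL le_rfl)
  rw [Wp_comm a₂ (γ t₂), hγ.Wp_eq_sub (h₁.trans h₁₂) h₂ le_rfl] at h₂L
  rw [hγ.Wp_eq_sub h₁ (h₁₂.trans h₂) le_rfl] at h₁L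
  linarith

variable {μ : ℝ → Measure X}

theorem IsUnitRayW.Wp_sub_le_Wp_sub (hp : 1 ≤ p) (hμ : IsUnitRayW p μ) {ρ : Measure X}
    (hρ : HasFiniteMomentP p ρ) {s t : ℝ} (hs : 0 ≤ s) (hst : s ≤ t) :
    Wp p ρ (μ t) - t ≤ Wp p ρ (μ s) - s := by
  have := Wp_triangle hp hρ (hμ.1 s hs) (hμ.1 t (hs.trans hst))
  rw [hμ.Wp_eq_sub hs hst] at this
  linarith

theorem IsUnitRayW.tendsto_busemann (hp : 1 ≤ p) (hμ : IsUnitRayW p μ) {ρ : Measure X}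
    (hρ : HasFiniteMomentP p ρ) :
    Tendsto (fun t => Wp p ρ (μ t) - t) atTop (𝓝 (busemann p μ ρ)) := by
  set g : ℝ → ℝ := fun t => Wp p ρ (μ (max t 0)) - max t 0
  have hg : Antitone g := fun s t hst =>
    hμ.Wp_sub_le_Wp_sub hp hρ (le_max_right s 0) (max_le_max_right 0 hst)
  have hbdd : BddBelow (range g) := by
    refine ⟨-Wp p (μ 0) ρ, forall_mem_range.2 fun t => ?_⟩
    have := Wp_triangle hp (hμ.1 0 le_rfl) hρ (hμ.1 _ (le_max_right t 0))
    rw [hμ.Wp_eq_sub le_rfl (le_max_right t 0)] at this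
    linarith
  refine tendsto_nhds_limUnder ⟨_, (tendsto_atTop_ciInf hg hbdd).congr' ?_⟩
  filter_upwards [eventually_ge_atTop 0] with t ht
  simp only [g, max_eq_left ht]

theorem IsUnitRayW.busemann_le_Wp_add_busemann (hp : 1 ≤ p) (hμ : IsUnitRayW p μ)
    {ρ₁ ρ₂ : Measure X} (hρ₁ : HasFiniteMomentP p ρ₁) (hρ₂ : HasFiniteMomentP p ρ₂) :
    busemann p μ ρ₁ ≤ Wp p ρ₁ ρ₂ + busemann p μ ρ₂ := by
  refine le_of_tendsto_of_tendsto (hμ.tendsto_busemann hp hρ₁)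
    ((hμ.tendsto_busemann hp hρ₂).const_add _) ?_
  filter_upwards [eventually_ge_atTop 0] with t ht
  have := Wp_triangle hp hρ₁ hρ₂ (hμ.1 t ht)
  linarith

theorem IsCoRay.busemann_add_le (hp : 1 ≤ p) {ν : ℝ → Measure X} (hμ : IsUnitRayW p μ)
    (hco : IsCoRay p μ ν) {t₁ t₂ : ℝ} (h₁ : 0 ≤ t₁) (h₁₂ : t₁ ≤ t₂) :
    busemann p μ (ν t₂) + (t₂ - t₁) ≤ busemann p μ (ν t₁) := by
  obtain ⟨hν, tn, ν0n, νn, htn, hν0n, hν0, hgeo, hconv⟩ := hco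
  have h₂ : 0 ≤ t₂ := h₁.trans h₁₂
  set L : ℕ → ℝ := fun n => Wp p (ν0n n) (μ (tn n))
  have hL : Tendsto L atTop atTop := by
    refine tendsto_atTop_mono' _ ?_
      (htn.atTop_add ((tendsto_const_nhds (x := Wp p (μ 0) (ν 0))).add hν0).neg)
    filter_upwards [htn.eventually_ge_atTop 0] with n hn
    have h0 := Wp_triangle hp (hμ.1 0 le_rfl) (hν.1 0 le_rfl) (hν0n n)
    have h1 := Wp_triangle hp (hμ.1 0 le_rfl) (hν0n n) (hμ.1 _ hn)
    rw [Wp_comm (ν 0)] at h0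
    rw [hμ.Wp_eq_sub le_rfl hn] at h1
    linarith
  have key : ∀ᶠ n in atTop, Wp p (ν t₂) (μ (tn n)) - tn n + (t₂ - t₁) ≤
      Wp p (νn n t₂) (ν t₂) + Wp p (νn n t₁) (ν t₁) + (Wp p (ν t₁) (μ (tn n)) - tn n) := by
    filter_upwards [hL.eventually_ge_atTop t₂] with n hn
    obtain ⟨-, hend, hgeon⟩ := hgeo n
    have := hgeon.Wp_add_le hp h₁ h₁₂ hn (hν.1 t₁ h₁) (hν.1 t₂ h₂)
    rw [hend] at this
    linarith
  have := le_of_tendsto_of_tendsto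
    (((hμ.tendsto_busemann hp (hν.1 t₂ h₂)).comp htn).add_const (t₂ - t₁))
    (((hconv t₂ h₂).add (hconv t₁ h₁)).add ((hμ.tendsto_busemann hp (hν.1 t₁ h₁)).comp htn)) key
  linarith

theorem IsCoRay.busemann_sub_busemann (hp : 1 ≤ p) {ν : ℝ → Measure X} (hμ : IsUnitRayW p μ)
    (hco : IsCoRay p μ ν) {t₁ t₂ : ℝ} (h₁ : 0 ≤ t₁) (h₁₂ : t₁ ≤ t₂) :
    busemann p μ (ν t₁) - busemann p μ (ν t₂) = t₂ - t₁ := by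
  have hlip := hμ.busemann_le_Wp_add_busemann hp (hco.1.1 t₁ h₁) (hco.1.1 t₂ (h₁.trans h₁₂))
  rw [hco.1.Wp_eq_sub h₁ h₁₂] at hlip
  linarith [hco.busemann_add_le hp hμ h₁ h₁₂]

end Busemann

theorem stmt_5_general {X : Type*} [MetricSpace X] [MeasurableSpace X] [BorelSpace X]
    [CompleteSpace X] [TopologicalSpace.SeparableSpace X]
    {p : ℝ} (hp : 1 < p) (μ ν : ℝ → Measure X)
    (hμ : IsUnitRayW p μ) (hco : IsCoRay p μ ν)
    (t₁ t₂ : ℝ) (h₁ : 0 ≤ t₁) (h₂ : 0 ≤ t₂) :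
    ∃ b₁ b₂ : ℝ,
      Tendsto (fun t => Wp p (ν t₁) (μ t) - t) atTop (𝓝 b₁) ∧
      Tendsto (fun t => Wp p (ν t₂) (μ t) - t) atTop (𝓝 b₂) ∧
      b₁ - b₂ = t₂ - t₁ := by
  have : SecondCountableTopology X := UniformSpace.secondCountable_of_separable X
  refine ⟨busemann p μ (ν t₁), busemann p μ (ν t₂), hμ.tendsto_busemann hp.le (hco.1.1 t₁ h₁),
    hμ.tendsto_busemann hp.le (hco.1.1 t₂ h₂), ?_⟩
  rcases le_total t₁ t₂ with h₁₂ | h₂₁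
  · exact hco.busemann_sub_busemann hp.le hμ h₁ h₁₂
  · linarith [hco.busemann_sub_busemann hp.le hμ h₂ h₂₁]

/-- the Busemann function of `(μ_t)` decreases linearly along any
co-ray `(ν_t)`: `b_μ(ν_{t₁}) - b_μ(ν_{t₂}) = t₂ - t₁`. -/
theorem stmt_5 {X : Type*} [MetricSpace X] [MeasurableSpace X] [BorelSpace X]
    [CompleteSpace X] [TopologicalSpace.SeparableSpace X]
    [LocallyCompactSpace X] [NoncompactSpace X] (hX : IsLengthSpace X)
    {p : ℝ} (hp : 1 < p) (μ ν : ℝ → Measure X)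
    (hμ : IsUnitRayW p μ) (hco : IsCoRay p μ ν)
    (t₁ t₂ : ℝ) (h₁ : 0 ≤ t₁) (h₂ : 0 ≤ t₂) :
    ∃ b₁ b₂ : ℝ,
      Tendsto (fun t => Wp p (ν t₁) (μ t) - t) atTop (𝓝 b₁) ∧
      Tendsto (fun t => Wp p (ν t₂) (μ t) - t) atTop (𝓝 b₂) ∧
      b₁ - b₂ = t₂ - t₁ :=
  stmt_5_general hp μ ν hμ hco t₁ t₂ h₁ h₂
end
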